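/- Let (M, g, m) be the weighted Riemannian manifold with generator L satisfying the curvature-dimension condition CD(1/2, ∞), with semigroup (P_t). Suppose h is an eigenfunction of L with Lh = -h, i.e. P_t h = e^{-t} h, and suppose the gradient bound Γ(P_t f) ≤ (1/(2(e^t - 1))) P_t(f²) holds for all t > 0 and locally Lipschitz f. Then for all p ≥ 1 and t > 0: ∫ Γ(h)^p dm ≤ (e^{2t}/(2(e^t - 1)))^p ∫ h^{2p} dm. -/

import Mathlib

open MeasureTheory Real
noncomputable section

/-- The standard Gaussian measure on `ℝ^d`. -/
def stdGaussian (d : ℕ) : Measure (EuclideanSpace ℝ (Fin d)) :=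
  volume.withDensity fun x => ENNReal.ofReal ((2 * π) ^ (-(d : ℝ) / 2) * Real.exp (-‖x‖ ^ 2 / 2))

/-- Jacobian matrix of a vector field on `ℝ^d`. -/
def jacobian {d : ℕ} (f : EuclideanSpace ℝ (Fin d) → EuclideanSpace ℝ (Fin d))
    (x : EuclideanSpace ℝ (Fin d)) : Matrix (Fin d) (Fin d) ℝ :=
  Matrix.of fun i j => fderiv ℝ f x (EuclideanSpace.single j 1) i

/-- Divergence of a vector field on `ℝ^d`. -/
def diverg {d : ℕ} (f : EuclideanSpace ℝ (Fin d) → EuclideanSpace ℝ (Fin d))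
    (x : EuclideanSpace ℝ (Fin d)) : ℝ :=
  ∑ i, fderiv ℝ f x (EuclideanSpace.single i 1) i

/-- Hilbert–Schmidt inner product of matrices. -/
def hsInner {d : ℕ} (A B : Matrix (Fin d) (Fin d) ℝ) : ℝ := ∑ i, ∑ j, A i j * B i j

/-- Hilbert–Schmidt (Frobenius) norm of a matrix. -/
def hsNorm {d : ℕ} (A : Matrix (Fin d) (Fin d) ℝ) : ℝ := Real.sqrt (∑ i, ∑ j, (A i j) ^ 2)

/-- Quadratic form `⟨A v, v⟩`. -/
def quadForm {d : ℕ} (A : Matrix (Fin d) (Fin d) ℝ) (v : EuclideanSpace ℝ (Fin d)) : ℝ :=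
  ∑ i, A.mulVec (fun j => v j) i * v i

/-- `τ` is a Stein kernel for `μ` w.r.t. the standard Gaussian, tested against smooth
compactly supported vector fields. -/
def IsSteinKernel {d : ℕ} (μ : Measure (EuclideanSpace ℝ (Fin d)))
    (τ : EuclideanSpace ℝ (Fin d) → Matrix (Fin d) (Fin d) ℝ) : Prop :=
  ∀ f : EuclideanSpace ℝ (Fin d) → EuclideanSpace ℝ (Fin d),
    ContDiff ℝ (⊤ : ℕ∞) f → HasCompactSupport f →
      ∫ x, (inner ℝ x (f x) : ℝ) ∂μ = ∫ x, hsInner (τ x) (jacobian f x) ∂μ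

/-- The measure `e^{-φ(x)} dx`. -/
def expMeasure {d : ℕ} (φ : EuclideanSpace ℝ (Fin d) → ℝ) : Measure (EuclideanSpace ℝ (Fin d)) :=
  volume.withDensity fun x => ENNReal.ofReal (Real.exp (-φ x))

/-- Variance of `f` under `μ`. -/
def var {α : Type*} [MeasurableSpace α] (μ : Measure α) (f : α → ℝ) : ℝ :=
  ∫ x, (f x) ^ 2 ∂μ - (∫ x, f x ∂μ) ^ 2
/-- Moment bounds on the carré du champ of an eigenfunction under a `CD(1/2,∞)`-type
gradient bound for the semigroup. -/
theorem eigenfunction_carreDuChamp_moment_bound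
    {M : Type*} [MeasurableSpace M] [MetricSpace M] (m : Measure M)
    (P : ℝ → (M → ℝ) → (M → ℝ)) (Γ : (M → ℝ) → (M → ℝ)) (h : M → ℝ)
    (hΓnn : ∀ (f : M → ℝ) (x : M), 0 ≤ Γ f x)
    (hΓhom : ∀ (c : ℝ) (f : M → ℝ) (x : M), Γ (fun y => c * f y) x = c ^ 2 * Γ f x)
    (hLip : LocallyLipschitz h)
    (heig : ∀ t : ℝ, P t h = fun x => Real.exp (-t) * h x)
    (hgrad : ∀ t : ℝ, 0 < t → ∀ f : M → ℝ, LocallyLipschitz f → ∀ x : M,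
      Γ (P t f) x ≤ (1 / (2 * (Real.exp t - 1))) * P t (fun y => (f y) ^ 2) x)
    (p : ℝ) (hp : 1 ≤ p)
    (hjensen : ∀ (t : ℝ) (f : M → ℝ) (x : M),
      (P t (fun y => (f y) ^ 2) x) ^ p ≤ P t (fun y => ((f y) ^ 2) ^ p) x)
    (hinv : ∀ (t : ℝ) (f : M → ℝ), (∀ x, 0 ≤ f x) →
      ∫ x, P t f x ∂m = ∫ x, f x ∂m)
    (hint : ∀ t : ℝ, Integrable (P t (fun y => ((h y) ^ 2) ^ p)) m) :
    ∀ t : ℝ, 0 < t →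
      ∫ x, (Γ h x) ^ p ∂m
        ≤ (Real.exp (2 * t) / (2 * (Real.exp t - 1))) ^ p * ∫ x, ((h x) ^ 2) ^ p ∂m := by
  intro t ht
  have hc : 0 < Real.exp (2 * t) / (2 * (Real.exp t - 1)) := by
    apply div_pos (Real.exp_pos _)
    have : 1 < Real.exp t := by
      rw [show (1:ℝ) = Real.exp 0 by simp]; exact Real.exp_lt_exp.mpr ht
    linarith
  set c : ℝ := Real.exp (2 * t) / (2 * (Real.exp t - 1)) with hcdef
  -- pointwise bound: Γ h x ≤ c * P t (h²) x
  have key : ∀ x, Γ h x ≤ c * P t (fun y => (h y) ^ 2) x := by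
    intro x
    have h1 : Γ (P t h) x = Real.exp (-t) ^ 2 * Γ h x := by
      rw [heig t]; exact hΓhom _ _ _
    have h2 := hgrad t ht h hLip x
    rw [h1] at h2
    have he : Real.exp (-t) ^ 2 = (Real.exp (2 * t))⁻¹ := by
      rw [← Real.exp_nat_mul, ← Real.exp_neg]
      congr 1
      push_cast
      ring
    have hepos : (0:ℝ) < Real.exp (-t) ^ 2 := by positivity
    have h3 : Γ h x ≤ (Real.exp (-t) ^ 2)⁻¹ * ((1 / (2 * (Real.exp t - 1))) * P t (fun y => (h y) ^ 2) x) := by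
      rw [le_inv_mul_iff₀ hepos]
      linarith [h2]
    calc Γ h x ≤ (Real.exp (-t) ^ 2)⁻¹ * ((1 / (2 * (Real.exp t - 1))) * P t (fun y => (h y) ^ 2) x) := h3
      _ = c * P t (fun y => (h y) ^ 2) x := by
          rw [he, hcdef]; field_simp
  have hPnn : ∀ x, 0 ≤ P t (fun y => (h y) ^ 2) x := by
    intro x
    have := (hΓnn h x).trans (key x)
    nlinarith [this, hc]
  have keyp : ∀ x, (Γ h x) ^ p ≤ c ^ p * P t (fun y => ((h y) ^ 2) ^ p) x := by
    intro x
    calc (Γ h x) ^ p ≤ (c * P t (fun y => (h y) ^ 2) x) ^ p :=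
          Real.rpow_le_rpow (hΓnn h x) (key x) (by linarith)
      _ = c ^ p * (P t (fun y => (h y) ^ 2) x) ^ p :=
          Real.mul_rpow hc.le (hPnn x)
      _ ≤ c ^ p * P t (fun y => ((h y) ^ 2) ^ p) x := by
          have := hjensen t h x
          nlinarith [Real.rpow_nonneg hc.le p, this]
  have hintc : Integrable (fun x => c ^ p * P t (fun y => ((h y) ^ 2) ^ p) x) m :=
    (hint t).const_mul _
  calc ∫ x, (Γ h x) ^ p ∂m
      ≤ ∫ x, c ^ p * P t (fun y => ((h y) ^ 2) ^ p) x ∂m := by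
        apply integral_mono_of_nonneg
        · filter_upwards with x using Real.rpow_nonneg (hΓnn h x) p
        · exact hintc
        · filter_upwards with x using keyp x
    _ = c ^ p * ∫ x, P t (fun y => ((h y) ^ 2) ^ p) x ∂m := integral_const_mul _ _
    _ = c ^ p * ∫ x, ((h x) ^ 2) ^ p ∂m := by
        rw [hinv t _ (fun x => Real.rpow_nonneg (sq_nonneg _) p)]
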